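/- arXiv:1811.02051 — 4 statements merged into one kernel-verified Lean document; each statement's English description precedes it below -/
import Mathlib

section
/- Let k and n be positive integers. The minimum value of a_0 + a_1 + ... + a_n over all tuples (a_0, ..., a_n) of nonnegative integers satisfying, for each index i, the condition that the sum of all a_j with j ≠ i is at least k, equals ⌈(n+1)k/n⌉. -/
/-!
Summing the `n + 1` conditions `S - a_i ≥ k` gives `n S ≥ (n + 1) k`. Conversely, any `S ≥ 0` with
`n S ≥ (n + 1) k` is attained: split `S` into `n + 1` parts, each at most `S - k`, which is possible
because `S ≤ (n + 1) (S - k)` is the same inequality.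
-/

open Finset

theorem Fin.exists_sum_eq_of_le_mul {m c s : ℕ} (h : s ≤ m * c) :
    ∃ a : Fin m → ℕ, (∀ i, a i ≤ c) ∧ ∑ i, a i = s := by
  induction m generalizing s with
  | zero => exact ⟨0, fun i => i.elim0, by simp_all⟩
  | succ m ih =>
    obtain ⟨a, hac, has⟩ := ih (s := s - min s c) (by rw [Nat.succ_mul] at h; omega)
    refine ⟨Fin.cons (min s c) a, Fin.cases (by simp) (by simpa using hac), ?_⟩
    rw [Fin.sum_univ_succ, Fin.cons_zero]
    simp only [Fin.cons_succ, has]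
    omega

theorem exists_le_sum_erase_iff (n k : ℕ) (s : ℤ) :
    (∃ a : Fin (n+1) → ℕ,
        (∀ i, (k : ℤ) ≤ ∑ j ∈ univ.erase i, (a j : ℤ)) ∧ s = ∑ j, (a j : ℤ)) ↔
      0 ≤ s ∧ ((n + 1) * k : ℤ) ≤ n * s := by
  simp only [sum_erase_eq_sub (mem_univ _)]
  constructor
  · rintro ⟨a, ha, rfl⟩
    refine ⟨sum_nonneg fun j _ => by positivity, ?_⟩
    have hsum := sum_le_sum fun i (_ : i ∈ univ) => ha i
    simp only [sum_const, card_univ, Fintype.card_fin, sum_sub_distrib, nsmul_eq_mul] at hsum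
    push_cast at hsum
    linarith
  · rintro ⟨hs, hks⟩
    lift s to ℕ using hs
    have hkt : k ≤ s := by
      rcases n.eq_zero_or_pos with rfl | hn
      · simp only [CharP.cast_eq_zero, zero_add, one_mul, zero_mul, Int.natCast_nonpos_iff] at hks
        omega
      · have hnk : (n * k : ℤ) ≤ n * s := by linarith
        exact_mod_cast le_of_mul_le_mul_left hnk (by exact_mod_cast hn)
    obtain ⟨a, hac, has⟩ := Fin.exists_sum_eq_of_le_mul (m := n + 1) (c := s - k) (s := s)
      (by zify [hkt]; linarith)
    refine ⟨a, fun i => ?_, by exact_mod_cast has.symm⟩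
    have hai := hac i
    zify [hkt] at hai
    have hsum : ∑ j, (a j : ℤ) = s := by exact_mod_cast has
    linarith

theorem stmt0_general (n k : ℕ) (hn : 1 ≤ n) :
    IsLeast {s : ℤ | ∃ a : Fin (n+1) → ℕ,
        (∀ i : Fin (n+1), (k : ℤ) ≤ ∑ j ∈ Finset.univ.erase i, (a j : ℤ)) ∧
        s = ∑ j : Fin (n+1), (a j : ℤ)}
      ⌈((((n+1)*k : ℕ) : ℚ)) / (n : ℚ)⌉ := by
  have hn : (0 : ℚ) < n := by exact_mod_cast hn
  have ceil_le_iff (s : ℤ) : ⌈((((n+1)*k : ℕ) : ℚ)) / (n : ℚ)⌉ ≤ s ↔ ((n + 1) * k : ℤ) ≤ n * s := by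
    rw [Int.ceil_le, div_le_iff₀ hn, mul_comm (s : ℚ)]
    norm_cast
  simp only [IsLeast, lowerBounds, Set.mem_ofPred_eq, exists_le_sum_erase_iff, ← ceil_le_iff]
  exact ⟨⟨by positivity, le_rfl⟩, fun s hs => hs.2⟩

/-- The minimum value of `a_0 + ... + a_n` over all tuples of nonnegative integers
such that for each index `i` the sum of the `a_j` with `j ≠ i` is at least `k`
equals `⌈(n+1)k/n⌉`. -/
theorem stmt0 (n k : ℕ) (hn : 1 ≤ n) (hk : 1 ≤ k) :
    IsLeast {s : ℤ | ∃ a : Fin (n+1) → ℕ,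
        (∀ i : Fin (n+1), (k : ℤ) ≤ ∑ j ∈ Finset.univ.erase i, (a j : ℤ)) ∧
        s = ∑ j : Fin (n+1), (a j : ℤ)}
      ⌈((((n+1)*k : ℕ) : ℚ)) / (n : ℚ)⌉ :=
  stmt0_general n k hn
end

section
/- Define uniform B-splines recursively by B_1 = indicator function of [0,1] and B_i(x) = ∫_0^1 B_{i-1}(x-t) dt for i ≥ 2. Then for every integer i ≥ 2 and every integer j, (i-1)!·B_i(j) = A(i-1, j-1), where A(n,k) is the Eulerian number (number of permutations of {1,...,n} with exactly k ascents), with the convention A(n,k) = 0 for k < 0 or k ≥ n. -/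
/-- The number of ascents of a permutation of `Fin n`. -/
noncomputable def ascents (n : ℕ) (σ : Equiv.Perm (Fin n)) : ℕ :=
  Nat.card {i : Fin n // ∃ h : (i : ℕ) + 1 < n, σ i < σ ⟨(i : ℕ) + 1, h⟩}

/-- The Eulerian number `A(n,k)`: the number of permutations of an `n`-element set
with exactly `k` ascents. -/
noncomputable def eulerianNumber (n k : ℕ) : ℕ :=
  Nat.card {σ : Equiv.Perm (Fin n) // ascents n σ = k}

/-- Eulerian numbers with integer index, with convention `A(n,k) = 0`
for `k < 0` or `k ≥ n`. -/
noncomputable def eulerianZ (n : ℕ) (k : ℤ) : ℕ :=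
  if 0 ≤ k ∧ k < (n : ℤ) then eulerianNumber n k.toNat else 0

/-- The uniform B-splines, defined recursively:
`B₁` is the indicator function of `[0,1]`, and `B_i(x) = ∫_0^1 B_{i-1}(x-t) dt`. -/
noncomputable def Bspline : ℕ → ℝ → ℝ
  | 0 => fun _ => 0
  | 1 => fun x => if x ∈ Set.Icc (0:ℝ) 1 then 1 else 0
  | (i+2) => fun x => ∫ t in (0:ℝ)..1, Bspline (i+1) (x - t)

/-!
Writing `x₊ⁿ` for the truncated power, iterated integration over unit intervals gives
`n! B_{n+1}(x) = S_n(x) := ∑ₖ (-1)ᵏ (n+1 choose k) (x - k)₊ⁿ` (almost everywhere for `n = 0`,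
everywhere afterwards). Since `(x - k)₊ⁿ⁺¹ = (x - k) (x - k)₊ⁿ`, Pascal's rule yields
`S_{n+1}(x) = x S_n(x) + (n + 2 - x) S_n(x - 1)`. At integers this is the recurrence
`A(n+1, k) = (k+1) A(n, k) + (n+1-k) A(n, k-1)` of the Eulerian numbers, obtained by inserting the
largest letter into a permutation `σ` of `n` letters: the number of ascents stays the same when
the letter goes first or right after an ascent, and grows by one at the other `n - asc σ`
positions.
-/

open MeasureTheory Finset Equiv
open scoped Nat

/-- The strict inequality makes `truncPow 0` the indicator of `(0, ∞)`, so that `truncPowSum 0`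
is the indicator of `(0, 1]`; this agrees with `Bspline 1` almost everywhere and with
`eulerianCount 0 (j - 1)` at every integer `j`. -/
noncomputable def truncPow (n : ℕ) (x : ℝ) : ℝ := if 0 < x then x ^ n else 0

lemma truncPow_succ (n : ℕ) (x : ℝ) : truncPow (n + 1) x = x * truncPow n x := by
  unfold truncPow; split_ifs <;> ring

lemma continuous_truncPow_succ (n : ℕ) : Continuous (truncPow (n + 1)) := by
  have : truncPow (n + 1) = fun x => max x 0 ^ (n + 1) := by
    ext x; unfold truncPow; split_ifs with h
    · rw [max_eq_left h.le]
    · rw [max_eq_right (not_lt.1 h), zero_pow n.succ_ne_zero]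
  rw [this]; fun_prop

lemma hasDerivAt_truncPow_succ (n : ℕ) {x : ℝ} (hx : x ≠ 0) :
    HasDerivAt (truncPow (n + 1)) ((n + 1) * truncPow n x) x := by
  rcases hx.lt_or_gt with hx | hx
  · have hloc : truncPow (n + 1) =ᶠ[nhds x] fun _ => 0 := by
      filter_upwards [eventually_lt_nhds hx] with u hu
      simp [truncPow, hu.not_gt]
    simpa [truncPow, hx.not_gt] using (hasDerivAt_const x (0 : ℝ)).congr_of_eventuallyEq hloc
  · have hloc : truncPow (n + 1) =ᶠ[nhds x] fun u => u ^ (n + 1) := by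
      filter_upwards [eventually_gt_nhds hx] with u hu
      simp [truncPow, hu]
    simpa [truncPow, hx] using (hasDerivAt_pow (n + 1) x).congr_of_eventuallyEq hloc

lemma intervalIntegrable_truncPow (n : ℕ) (a b : ℝ) :
    IntervalIntegrable (truncPow n) volume a b := by
  have : truncPow n = (Set.Ioi 0).indicator (· ^ n) := rfl
  rw [this, intervalIntegrable_iff]
  exact ((continuous_pow n).intervalIntegrable a b).def'.indicator measurableSet_Ioi

lemma integral_truncPow_sub (n : ℕ) (a b c : ℝ) :
    ∫ u in a..b, truncPow n (u - c)
      = (truncPow (n + 1) (b - c) - truncPow (n + 1) (a - c)) / (n + 1) := by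
  have hF : ∀ u ∈ Set.Ioo (min a b) (max a b) \ {c}, HasDerivAt
      (fun u => truncPow (n + 1) (u - c) / (n + 1)) (truncPow n (u - c)) u := by
    intro u hu
    refine (((hasDerivAt_truncPow_succ n (sub_ne_zero.2 hu.2)).comp_sub_const u c).div_const
      ((n : ℝ) + 1)).congr_deriv ?_
    field_simp
  rw [integral_eq_of_hasDerivAt_off_countable (fun u => truncPow (n + 1) (u - c) / (n + 1)) _
    (Set.countable_singleton c)
    (((continuous_truncPow_succ n).comp (continuous_sub_right c)).div_const _).continuousOn hF
    (by simpa using (intervalIntegrable_truncPow n (a - c) (b - c)).comp_sub_right c)]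
  ring

lemma sum_range_choose_succ_mul {R : Type*} [CommRing R] (m : ℕ) (q : ℕ → R) :
    ∑ k ∈ range (m + 2), (-1) ^ k * ((m + 1).choose k : R) * q k
      = ∑ k ∈ range (m + 1), (-1) ^ k * (m.choose k : R) * (q k - q (k + 1)) := by
  set a : ℕ → R := fun k => (-1) ^ k * (m.choose k : R)
  have hpascal : ∀ k, (-1) ^ (k + 1) * ((m + 1).choose (k + 1) : R) = a (k + 1) - a k := by
    intro k; simp only [a, Nat.choose_succ_succ', Nat.cast_add, pow_succ]; ring
  calc ∑ k ∈ range (m + 2), (-1) ^ k * ((m + 1).choose k : R) * q k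
      = ∑ k ∈ range (m + 1), (a (k + 1) * q (k + 1) - a k * q (k + 1)) + a 0 * q 0 := by
        simp [sum_range_succ' _ (m + 1), hpascal, sub_mul, a]
    _ = ∑ k ∈ range (m + 2), a k * q k - ∑ k ∈ range (m + 1), a k * q (k + 1) := by
        rw [sum_sub_distrib, sum_range_succ' (fun k => a k * q k)]; ring
    _ = ∑ k ∈ range (m + 1), a k * (q k - q (k + 1)) := by
        simp [sum_range_succ _ (m + 1), a, mul_sub, sum_sub_distrib]

noncomputable def truncPowSum (n : ℕ) (x : ℝ) : ℝ :=
  ∑ k ∈ range (n + 2), (-1) ^ k * ((n + 1).choose k : ℝ) * truncPow n (x - k)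

lemma integral_truncPowSum (n : ℕ) (x : ℝ) :
    (n + 1) * ∫ u in (x - 1)..x, truncPowSum n u = truncPowSum (n + 1) x := by
  have hint : ∀ k ∈ range (n + 2), IntervalIntegrable
      (fun u => (-1) ^ k * ((n + 1).choose k : ℝ) * truncPow n (u - k)) volume (x - 1) x :=
    fun k _ => IntervalIntegrable.const_mul (by simpa using
      (intervalIntegrable_truncPow n (x - 1 - k) (x - k)).comp_sub_right (k : ℝ)) _
  unfold truncPowSum
  rw [intervalIntegral.integral_finsetSum hint, mul_sum, sum_range_choose_succ_mul]
  refine sum_congr rfl fun k _ => ?_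
  rw [intervalIntegral.integral_const_mul, integral_truncPow_sub]
  push_cast
  field_simp
  ring_nf

lemma truncPowSum_succ (n : ℕ) (x : ℝ) :
    truncPowSum (n + 1) x = x * truncPowSum n x + (n + 2 - x) * truncPowSum n (x - 1) := by
  set t : ℕ → ℝ := fun k => truncPow n (x - k)
  set a : ℕ → ℝ := fun k => (-1) ^ k * ((n + 1).choose k : ℝ)
  set f : ℕ → ℝ := fun k => a k * k * t k
  have htel : ∀ k ∈ range (n + 2), a k * (k * t k + (n + 1 - k) * t (k + 1)) = f k - f (k + 1) := by
    intro k hk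
    have hk : k ≤ n + 1 := Nat.lt_succ_iff.1 (mem_range.1 hk)
    have hc := congrArg (Nat.cast (R := ℝ)) (Nat.choose_succ_right_eq (n + 1) k)
    push_cast [Nat.cast_sub hk] at hc
    simp only [f, a, pow_succ]; push_cast
    linear_combination (-(-1) ^ k * t (k + 1)) * hc
  -- after Pascal's rule the two sides differ by a telescoping sum
  have hsum : ∑ k ∈ range (n + 2), a k * (k * t k + (n + 1 - k) * t (k + 1)) = 0 := by
    rw [sum_congr rfl htel, sum_range_sub']
    simp [f, a, Nat.choose_succ_self]
  have hshift : ∀ k : ℕ, truncPow n (x - 1 - k) = t (k + 1) := by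
    intro k; simp only [t]; push_cast; ring_nf
  have hleft : truncPowSum (n + 1) x
      = ∑ k ∈ range (n + 2), a k * ((x - k) * t k - (x - (k + 1)) * t (k + 1)) := by
    rw [truncPowSum, sum_range_choose_succ_mul (n + 1) fun k => truncPow (n + 1) (x - k)]
    simp [t, a, truncPow_succ]
  rw [hleft, truncPowSum, truncPowSum, mul_sum, mul_sum, eq_comm, ← sub_eq_zero, ← hsum]
  simp only [hshift, ← sum_add_distrib, ← sum_sub_distrib]
  refine sum_congr rfl fun k _ => ?_
  simp only [a, t]
  ring

lemma Bspline_add_two (i : ℕ) (x : ℝ) :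
    Bspline (i + 2) x = ∫ u in (x - 1)..x, Bspline (i + 1) u := by
  simp only [Bspline]
  rw [intervalIntegral.integral_comp_sub_left, sub_zero]

lemma Bspline_one_ae_eq : Bspline 1 =ᵐ[volume] truncPowSum 0 := by
  filter_upwards [Measure.ae_ne volume 0] with x hx
  simp only [Bspline, truncPowSum, truncPow, Set.mem_Icc, sum_range_succ, sum_range_zero,
    zero_add, Nat.choose_zero_right, Nat.choose_self, pow_zero, pow_one, Nat.cast_one,
    Nat.cast_zero, sub_zero, one_mul, neg_one_mul]
  split_ifs <;> grind

lemma factorial_mul_Bspline_add_two_of_ae_eq {n : ℕ}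
    (h : (fun x => (n ! : ℝ) * Bspline (n + 1) x) =ᵐ[volume] truncPowSum n) (x : ℝ) :
    ((n + 1)! : ℝ) * Bspline (n + 2) x = truncPowSum (n + 1) x := by
  rw [Bspline_add_two, ← integral_truncPowSum, Nat.factorial_succ, Nat.cast_mul, mul_assoc,
    ← intervalIntegral.integral_const_mul, intervalIntegral.integral_congr_ae
      (h.mono fun u hu _ => hu)]
  push_cast; ring

lemma factorial_mul_Bspline_ae_eq (n : ℕ) :
    (fun x => (n ! : ℝ) * Bspline (n + 1) x) =ᵐ[volume] truncPowSum n := by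
  induction n with
  | zero => simpa using Bspline_one_ae_eq
  | succ n ih => exact .of_forall (factorial_mul_Bspline_add_two_of_ae_eq ih)

def ascentCount (f : ℕ → ℕ) (m : ℕ) : ℕ := #{i ∈ range m | f i < f (i + 1)}

lemma ascentCount_succ (f : ℕ → ℕ) (m : ℕ) :
    ascentCount f (m + 1) = ascentCount f m + if f m < f (m + 1) then 1 else 0 := by
  simp only [ascentCount, card_filter, sum_range_succ]

lemma ascentCount_succ' (f : ℕ → ℕ) (m : ℕ) :
    ascentCount f (m + 1) = ascentCount (fun i => f (i + 1)) m + if f 0 < f 1 then 1 else 0 := by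
  simp only [ascentCount, card_filter, sum_range_succ']

lemma ascentCount_le (f : ℕ → ℕ) (m : ℕ) : ascentCount f m ≤ m :=
  (card_filter_le _ _).trans (card_range m).le

def insertAt (f : ℕ → ℕ) (p M : ℕ) (q : ℕ) : ℕ :=
  if q < p then f q else if q = p then M else f (q - 1)

lemma insertAt_zero_succ (f : ℕ → ℕ) (M : ℕ) : (fun q => insertAt f 0 M (q + 1)) = f := by
  funext q; simp [insertAt]

lemma insertAt_succ_succ (f : ℕ → ℕ) (p M : ℕ) :
    (fun q => insertAt f (p + 1) M (q + 1)) = insertAt (fun i => f (i + 1)) p M := by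
  funext q
  simp only [insertAt, Nat.add_lt_add_iff_right, Nat.add_right_cancel_iff]
  split_ifs <;> first | rfl | (congr 1; omega)

/-- Inserting a value `M` exceeding all the others at position `p` creates an ascent
(the one ending in `M`) and destroys the ascent at `p - 1`, if there is one. -/
lemma ascentCount_insertAt (f : ℕ → ℕ) {n p M : ℕ} (hp : p ≤ n) (hlt : ∀ i < n, f i < M)
    (hle : f n ≤ M) :
    ascentCount (insertAt f p M) (n + 1) + (if 0 < p ∧ f (p - 1) < f p then 1 else 0)
      = ascentCount f n + if 0 < p then 1 else 0 := by
  induction p generalizing f n with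
  | zero =>
    have hM : ¬M < f 0 := by
      rcases n.eq_zero_or_pos with rfl | hn
      · exact hle.not_gt
      · exact (hlt 0 hn).not_gt
    rw [ascentCount_succ', insertAt_zero_succ]
    simp [insertAt, hM]
  | succ p ih =>
    obtain ⟨n, rfl⟩ : ∃ m, n = m + 1 := ⟨n - 1, by omega⟩
    have := ih (fun i => f (i + 1)) (by omega) (fun i hi => hlt (i + 1) (by omega)) hle
    rw [ascentCount_succ', insertAt_succ_succ, ascentCount_succ' f]
    rcases p with _ | p
    · simp only [insertAt, hlt 0 (by omega), lt_self_iff_false, zero_tsub, zero_add, and_self,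
        if_true, if_false, add_zero, tsub_self, true_and, Nat.lt_one_iff] at this ⊢
      omega
    · simp only [insertAt, add_tsub_cancel_right, Nat.zero_lt_succ, true_and, if_true,
        Nat.lt_add_left_iff_pos] at this ⊢
      omega

/-- The one-line notation of `σ`, padded with `0`: the padding makes position `n - 1` never an
ascent, so `ascents n σ = ascentCount (word σ) n`. -/
def word {n : ℕ} (σ : Perm (Fin n)) (i : ℕ) : ℕ := if h : i < n then σ ⟨i, h⟩ else 0

lemma ascents_eq_ascentCount {n : ℕ} (σ : Perm (Fin n)) :
    ascents n σ = ascentCount (word σ) n := by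
  rw [ascents, Nat.card_eq_fintype_card, Fintype.card_subtype, ascentCount, card_filter,
    card_filter, ← Fin.sum_univ_eq_sum_range]
  refine sum_congr rfl fun i _ => ?_
  by_cases h : (i : ℕ) + 1 < n <;> simp [word, h]

lemma ascents_lt {n : ℕ} (hn : 0 < n) (σ : Perm (Fin n)) : ascents n σ < n := by
  obtain ⟨m, rfl⟩ : ∃ m, n = m + 1 := ⟨n - 1, by omega⟩
  rw [ascents_eq_ascentCount, ascentCount_succ]
  simpa [word] using Nat.lt_succ_of_le (ascentCount_le _ m)

/-- Inserts the largest letter at position `p` of the one-line notation of `σ`. -/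
def insertMax {n : ℕ} (σ : Perm (Fin n)) (p : Fin (n + 1)) : Perm (Fin (n + 1)) :=
  ((finSuccEquiv' p).trans (optionCongr σ)).trans (finSuccEquiv' (Fin.last n)).symm

lemma insertMax_apply_self {n : ℕ} (σ : Perm (Fin n)) (p : Fin (n + 1)) :
    insertMax σ p p = Fin.last n := by
  simp [insertMax]

lemma insertMax_apply_succAbove {n : ℕ} (σ : Perm (Fin n)) (p : Fin (n + 1)) (r : Fin n) :
    insertMax σ p (p.succAbove r) = (σ r).castSucc := by
  simp [insertMax, ← Fin.succAbove_last]

lemma insertMax_bijective {n : ℕ} :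
    Function.Bijective fun x : Perm (Fin n) × Fin (n + 1) => insertMax x.1 x.2 := by
  rw [Fintype.bijective_iff_injective_and_card]
  refine ⟨fun ⟨σ, p⟩ ⟨σ', p'⟩ h => ?_, by simp [Fintype.card_perm, Nat.factorial_succ, mul_comm]⟩
  simp only at h
  obtain rfl : p = p' := (insertMax σ' p').injective <| by
    rw [insertMax_apply_self, ← h, insertMax_apply_self]
  obtain rfl : σ = σ' := Equiv.ext fun r => Fin.castSucc_injective _ <| by
    simpa [insertMax_apply_succAbove] using DFunLike.congr_fun h (p.succAbove r)
  rfl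

lemma word_insertMax {n : ℕ} (σ : Perm (Fin n)) (p : Fin (n + 1)) :
    word (insertMax σ p) = insertAt (word σ) p n := by
  funext q
  rcases lt_trichotomy q p with hq | rfl | hq
  · have : (⟨q, by omega⟩ : Fin (n + 1)) = p.succAbove ⟨q, by omega⟩ := by
      rw [Fin.succAbove_of_castSucc_lt _ _ (by simpa [Fin.lt_def] using hq)]; rfl
    simp [word, insertAt, hq, show q < n by omega, show q ≤ n by omega, this,
      insertMax_apply_succAbove]
  · simp [word, insertAt, insertMax_apply_self, Nat.lt_succ_iff.1 p.isLt]
  · by_cases hqn : q < n + 1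
    · have : (⟨q, hqn⟩ : Fin (n + 1)) = p.succAbove ⟨q - 1, by omega⟩ := by
        rw [Fin.succAbove_of_le_castSucc _ _
          (by simp only [Fin.castSucc_mk, Fin.le_iff_val_le_val]; omega)]
        ext; simp only [Fin.succ_mk]; omega
      simp [word, insertAt, hq.not_gt, hq.ne', hqn, show q - 1 < n by omega, this,
        insertMax_apply_succAbove]
    · simp [word, insertAt, hq.not_gt, hq.ne', hqn, show ¬q - 1 < n by omega]

lemma ascents_insertMax {n : ℕ} (σ : Perm (Fin n)) (p : Fin (n + 1)) :
    ascents (n + 1) (insertMax σ p)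
      = ascents n σ + if 0 < (p : ℕ) ∧ ¬word σ (p - 1) < word σ p then 1 else 0 := by
  have hlt : ∀ i < n, word σ i < n := fun i hi => by simp [word, hi]
  have key := ascentCount_insertAt (word σ) (Nat.lt_succ_iff.1 p.isLt) hlt (by simp [word])
  rw [ascents_eq_ascentCount, ascents_eq_ascentCount, word_insertMax]
  split_ifs at key ⊢ <;> omega

/-- For each `σ`, exactly `ascents n σ + 1` of the `n + 1` insertion positions keep the number
of ascents, namely position `0` and the positions right after an ascent. -/
lemma card_insertMax_ascents_eq {n : ℕ} (σ : Perm (Fin n)) (k : ℤ) :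
    (#{p | (ascents (n + 1) (insertMax σ p) : ℤ) = k} : ℤ)
      = (if (ascents n σ : ℤ) = k then 1 else 0) * (k + 1)
        + (if (ascents n σ : ℤ) = k - 1 then 1 else 0) * (n + 1 - k) := by
  rw [card_filter, Nat.cast_sum, Fin.sum_univ_succ]
  simp only [ascents_insertMax, Fin.val_zero, Fin.val_succ, lt_irrefl, false_and, if_false,
    add_zero, Nat.add_sub_cancel, Nat.zero_lt_succ, true_and, Nat.cast_ite, Nat.cast_add,
    Nat.cast_one, Nat.cast_zero]
  set a := ascents n σ
  set A : ℕ → Prop := fun q => word σ q < word σ (q + 1)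
  rw [Fin.sum_univ_eq_sum_range (fun q => if (a : ℤ) + (if ¬A q then 1 else 0) = k then 1 else 0)]
  have hA : #{q ∈ range n | A q} = a := (ascents_eq_ascentCount σ).symm
  have hnA := card_filter_add_card_filter_not (s := range n) (p := A)
  rw [card_range, hA] at hnA
  have hsplit : ∀ q, (if (a : ℤ) + (if ¬A q then 1 else 0) = k then 1 else 0 : ℤ)
      = (if A q then 1 else 0) * (if (a : ℤ) = k then 1 else 0)
        + (if ¬A q then 1 else 0) * (if (a : ℤ) = k - 1 then 1 else 0) := by
    intro q; split_ifs <;> omega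
  rw [sum_congr rfl fun q _ => hsplit q, sum_add_distrib, ← sum_mul, ← sum_mul, sum_boole,
    sum_boole, hA]
  have hnA' : (#{q ∈ range n | ¬A q} : ℤ) = n - a := by omega
  rw [hnA']
  split_ifs <;> linarith

/-- Unlike `eulerianZ`, this takes the value `1` at `n = k = 0`, which starts the induction. -/
noncomputable def eulerianCount (n : ℕ) (k : ℤ) : ℕ :=
  #{σ : Perm (Fin n) | (ascents n σ : ℤ) = k}

lemma eulerianCount_zero (k : ℤ) : eulerianCount 0 k = if k = 0 then 1 else 0 := by
  have h : ∀ σ : Perm (Fin 0), ascents 0 σ = 0 := fun σ => by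
    simp [ascents_eq_ascentCount, ascentCount]
  by_cases hk : k = 0 <;> simp [eulerianCount, h, hk, eq_comm]

lemma eulerianCount_succ (n : ℕ) (k : ℤ) :
    (eulerianCount (n + 1) k : ℤ)
      = (k + 1) * eulerianCount n k + (n + 1 - k) * eulerianCount n (k - 1) := by
  rw [eulerianCount, card_filter, ← insertMax_bijective.sum_comp, Fintype.sum_prod_type]
  push_cast
  simp only [card_insertMax_ascents_eq, sum_add_distrib, ← sum_mul, sum_boole, eulerianCount]
  ring

lemma eulerianZ_eq_eulerianCount {n : ℕ} (hn : 0 < n) (k : ℤ) :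
    eulerianZ n k = eulerianCount n k := by
  rw [eulerianZ, eulerianNumber, Nat.card_eq_fintype_card, Fintype.card_subtype, eulerianCount]
  split_ifs with hk
  · congr 1; ext σ; simp only [mem_filter, mem_univ, true_and]; omega
  · refine (card_eq_zero.2 <| filter_eq_empty_iff.2 fun σ _ => ?_).symm
    have := ascents_lt hn σ
    omega

lemma truncPowSum_intCast_eq_eulerianCount (n : ℕ) (j : ℤ) :
    truncPowSum n j = eulerianCount n (j - 1) := by
  induction n generalizing j with
  | zero =>
    simp only [truncPowSum, truncPow, eulerianCount_zero, sum_range_succ, sum_range_zero,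
      zero_add, Nat.choose_zero_right, Nat.choose_self, pow_zero, pow_one, Nat.cast_one,
      Nat.cast_zero, sub_zero, one_mul, neg_one_mul]
    split_ifs <;> norm_cast at * <;> omega
  | succ n ih =>
    have hrec := congrArg (Int.cast : ℤ → ℝ) (eulerianCount_succ n (j - 1))
    push_cast at hrec
    rw [truncPowSum_succ, ih, show (j : ℝ) - 1 = ((j - 1 : ℤ) : ℝ) by push_cast; ring, ih, hrec]
    ring_nf

/-- Schoenberg's identity: `(i-1)!·B_i(j) = A(i-1, j-1)` for `i ≥ 2` and integers `j`. -/
theorem stmt13 (i : ℕ) (hi : 2 ≤ i) (j : ℤ) :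
    (Nat.factorial (i-1) : ℝ) * Bspline i (j : ℝ) = (eulerianZ (i-1) (j-1) : ℝ) := by
  obtain ⟨n, rfl⟩ : ∃ n, i = n + 2 := ⟨i - 2, by omega⟩
  rw [show n + 2 - 1 = n + 1 by omega,
    factorial_mul_Bspline_add_two_of_ae_eq (factorial_mul_Bspline_ae_eq n),
    truncPowSum_intCast_eq_eulerianCount, eulerianZ_eq_eulerianCount n.succ_pos]
end

section
/- Let n ≥ 2 and 1 ≤ t ≤ n be integers. Then for every integer k ≥ 1, (2n+2-t)/(2n-t) ≥ (⌈(2n+2-t)k/(2n-t)⌉ + n - 1)/(n + k - 1). -/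
/-- For `n ≥ 2`, `1 ≤ t ≤ n` and `k ≥ 1`:
`(2n+2-t)/(2n-t) ≥ (⌈(2n+2-t)k/(2n-t)⌉ + n - 1)/(n + k - 1)`. -/
theorem stmt15 (n t k : ℤ) (hn : 2 ≤ n) (ht1 : 1 ≤ t) (ht2 : t ≤ n) (hk : 1 ≤ k) :
    ((⌈(((2*n+2-t)*k : ℤ) : ℚ)/((2*n-t : ℤ) : ℚ)⌉ : ℚ) + (n : ℚ) - 1) / ((n : ℚ) + (k : ℚ) - 1)
      ≤ ((2*n+2-t : ℤ) : ℚ)/((2*n-t : ℤ) : ℚ) := by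
  set c : ℤ := ⌈(((2*n+2-t)*k : ℤ) : ℚ)/((2*n-t : ℤ) : ℚ)⌉ with hc
  have hbZ : (0:ℤ) < 2*n - t := by omega
  have hb : (0:ℚ) < ((2*n - t : ℤ) : ℚ) := by exact_mod_cast hbZ
  have hceil : (c : ℚ) < (((2*n+2-t)*k : ℤ) : ℚ)/((2*n-t : ℤ) : ℚ) + 1 :=
    Int.ceil_lt_add_one _
  have hq : (c : ℚ) * ((2*n-t : ℤ) : ℚ) < (((2*n+2-t)*k : ℤ) : ℚ) + ((2*n-t : ℤ) : ℚ) := by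
    have h2 := mul_lt_mul_of_pos_right hceil hb
    rw [add_mul, one_mul, div_mul_cancel₀ _ (ne_of_gt hb)] at h2
    exact h2
  have hZ : c * (2*n - t) ≤ (2*n+2-t)*k + (2*n-t) - 1 := by
    have : c * (2*n - t) < (2*n+2-t)*k + (2*n-t) := by exact_mod_cast hq
    omega
  have hd : (0:ℚ) < (n : ℚ) + (k : ℚ) - 1 := by
    have h3 : (0:ℤ) < n + k - 1 := by omega
    have h4 : ((0:ℤ):ℚ) < ((n + k - 1 : ℤ):ℚ) := by exact_mod_cast h3
    push_cast at h4
    linarith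
  rw [div_le_div_iff₀ hd hb]
  have key : (c + n - 1) * (2*n - t) ≤ (2*n+2-t) * (n + k - 1) := by nlinarith [hZ]
  have keyQ : ((c:ℚ) + (n:ℚ) - 1) * ((2*n-t : ℤ) : ℚ) ≤ ((2*n+2-t : ℤ) : ℚ) * ((n:ℚ) + (k:ℚ) - 1) := by
    exact_mod_cast key
  push_cast at keyQ ⊢
  linarith [keyQ]
end

section
/- For integers m ≥ 2, 0 ≤ q ≤ 2m, and t ≥ 0, set d = t(2m+1) + q + 1 and r = 2m(m+1)t + mq + ⌊mq/(2m+1)⌋. Then r = ⌊2m(m+1)(d-1)/(2m+1)⌋, and Σ_{k=0}^{m} (-1)^k C(2m+2,k) C(2m-1+r-kd, 2m-1) = Σ_{k=0}^{m} (-1)^k C(2m+2,k) C(m-1+⌊mq/(2m+1)⌋+(q+1)(m-k)+t(2m(m+1)-k(2m+1)), 2m-1), where C(a,b) = 0 for a < b. -/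
/-!
Both claims are arithmetic in `m`, `q`, `t`. Since
`2m(m+1)(d-1) = (2m(m+1)t + mq)(2m+1) + mq`, dividing by `2m+1` gives `r`.
For the sums, the two sides agree term by term: for `k ≤ m` the numbers
`2m-1+r-kd` and `m-1+⌊mq/(2m+1)⌋+(q+1)(m-k)+t(2m(m+1)-k(2m+1))` coincide,
because adding `kd` to the second one gives `2m-1+r`.
-/

theorem two_mul_mul_succ_mul_div (m q t : ℕ) :
    2*m*(m+1)*(t*(2*m+1) + q) / (2*m+1) = 2*m*(m+1)*t + m*q + m*q/(2*m+1) := by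
  have hsplit : 2*m*(m+1)*(t*(2*m+1) + q) = m*q + (2*m+1)*(2*m*(m+1)*t + m*q) := by ring
  rw [hsplit, Nat.add_mul_div_left _ _ (Nat.succ_pos _)]
  ring

theorem mul_two_mul_add_one_le (m k : ℕ) (hk : k ≤ m) : k*(2*m+1) ≤ 2*m*(m+1) :=
  calc k*(2*m+1) ≤ m*(2*m+1) := Nat.mul_le_mul_right _ hk
    _ ≤ 2*m*(m+1) := by nlinarith

theorem two_mul_sub_one_add_sub_mul (m q t c k : ℕ) (hk : k ≤ m) :
    2*m - 1 + (2*m*(m+1)*t + m*q + c) - k*(t*(2*m+1) + q + 1)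
      = m - 1 + c + (q+1)*(m-k) + t*(2*m*(m+1) - k*(2*m+1)) := by
  rcases Nat.eq_zero_or_pos m with rfl | hm
  · obtain rfl : k = 0 := Nat.le_zero.mp hk
    simp
  refine Nat.sub_eq_of_eq_add ?_
  zify [hm, hk, mul_two_mul_add_one_le m k hk, (by omega : 1 ≤ 2*m)]
  ring

theorem stmt18_general (m q t : ℕ)
    (d r : ℕ) (hd : d = t*(2*m+1) + q + 1)
    (hr : r = 2*m*(m+1)*t + m*q + (m*q)/(2*m+1)) :
    (r : ℤ) = ⌊((2*m*(m+1)*(d-1) : ℕ) : ℚ) / ((2*m+1 : ℕ) : ℚ)⌋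
      ∧ ∑ k ∈ Finset.range (m+1), (-1 : ℤ)^k * (Nat.choose (2*m+2) k : ℤ)
            * (Nat.choose (2*m - 1 + r - k*d) (2*m-1) : ℤ)
        = ∑ k ∈ Finset.range (m+1), (-1 : ℤ)^k * (Nat.choose (2*m+2) k : ℤ)
            * (Nat.choose (m - 1 + (m*q)/(2*m+1) + (q+1)*(m-k)
                + t*(2*m*(m+1) - k*(2*m+1))) (2*m-1) : ℤ) := by
  subst hd hr
  refine ⟨?_, Finset.sum_congr rfl fun k hk => ?_⟩
  · rw [Rat.floor_natCast_div_natCast, ← Int.natCast_div, Nat.add_sub_cancel,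
      two_mul_mul_succ_mul_div]
  · rw [two_mul_sub_one_add_sub_mul m q t _ k (Nat.lt_succ_iff.mp (Finset.mem_range.mp hk))]

/-- For `m ≥ 2`, `0 ≤ q ≤ 2m`, `t ≥ 0`, with `d = t(2m+1)+q+1` and
`r = 2m(m+1)t + mq + ⌊mq/(2m+1)⌋`: one has `r = ⌊2m(m+1)(d-1)/(2m+1)⌋` and the
alternating binomial sum identity rewriting `Δ²h_B(r)` as `P_{m,q}(t)`. -/
theorem stmt18 (m q t : ℕ) (hm : 2 ≤ m) (hq : q ≤ 2*m)
    (d r : ℕ) (hd : d = t*(2*m+1) + q + 1)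
    (hr : r = 2*m*(m+1)*t + m*q + (m*q)/(2*m+1)) :
    (r : ℤ) = ⌊((2*m*(m+1)*(d-1) : ℕ) : ℚ) / ((2*m+1 : ℕ) : ℚ)⌋
      ∧ ∑ k ∈ Finset.range (m+1), (-1 : ℤ)^k * (Nat.choose (2*m+2) k : ℤ)
            * (Nat.choose (2*m - 1 + r - k*d) (2*m-1) : ℤ)
        = ∑ k ∈ Finset.range (m+1), (-1 : ℤ)^k * (Nat.choose (2*m+2) k : ℤ)
            * (Nat.choose (m - 1 + (m*q)/(2*m+1) + (q+1)*(m-k)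
                + t*(2*m*(m+1) - k*(2*m+1))) (2*m-1) : ℤ) :=
  stmt18_general m q t d r hd hr
end
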